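/- Let ỹ(a, W + tX) = (W̃_H + tX̃_H)ᵀ (W̃_{H-1} + tX̃_{H-1})ᵀ ⋯ (W̃₀ + tX̃₀)ᵀ a, where W̃ᵢ = S_{i+1}(a,W) Wᵢ S_i(a,W) and X̃ᵢ = S_{i+1}(a,W) Xᵢ S_i(a,W) (with S₀ the identity) are the weight and perturbation matrices with fixed ReLU switches. Then the second derivative in t at t = 0 satisfies the bound |(d²/dt²)|_{t=0} ỹ(a, W + tX)| ≤ H(H+1) · ‖W‖_*^{H−1} · ‖X‖² · ‖a‖₂. -/

import Mathlib

open scoped BigOperators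

/-- Index set for all weights of the network: a weight `w^i_{j,k}` connects
neuron `j` in layer `i` to neuron `k` in layer `i+1`. -/
abbrev WeightIdx (n : ℕ → ℕ) (H : ℕ) : Type :=
  (i : Fin (H + 1)) × (Fin (n i) × Fin (n (i + 1)))

/-- Weight space `ℝ^m`, with the Euclidean norm. -/
abbrev WeightSpace (n : ℕ → ℕ) (H : ℕ) : Type :=
  EuclideanSpace ℝ (WeightIdx n H)

/-- Activations of the feed-forward ReLU network:
`x_0 = a`, `x_{k+1} = σ(W_k^T x_k)`. -/
def netAct (n : ℕ → ℕ) (H : ℕ) (W : WeightSpace n H)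
    (a : EuclideanSpace ℝ (Fin (n 0))) : (k : ℕ) → k ≤ H + 1 → (Fin (n k) → ℝ)
  | 0, _ => a
  | k + 1, h => fun j =>
      max (∑ l : Fin (n k), W ⟨⟨k, h⟩, (l, j)⟩ * netAct n H W a k (Nat.le_of_succ_le h) l) 0

/-- Scalar output of the ReLU network, `y(a, W)`. -/
def netOut (n : ℕ → ℕ) (H : ℕ) (hout : n (H + 1) = 1) (W : WeightSpace n H)
    (a : EuclideanSpace ℝ (Fin (n 0))) : ℝ :=
  netAct n H W a (H + 1) le_rfl ⟨0, by omega⟩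

/-- Quadratic training loss `ℓ(W)`. -/
noncomputable def loss (n : ℕ → ℕ) (H N : ℕ) (hout : n (H + 1) = 1)
    (a : Fin N → EuclideanSpace ℝ (Fin (n 0)))
    (f : EuclideanSpace ℝ (Fin (n 0)) → ℝ) (W : WeightSpace n H) : ℝ :=
  (1 / (2 * (N : ℝ))) * ∑ i, (f (a i) - netOut n H hout W (a i)) ^ 2

/-- Regularized loss `ℓ_λ(W) = ℓ(W) + (λ/2)‖W‖²`. -/
noncomputable def lossReg (n : ℕ → ℕ) (H N : ℕ) (hout : n (H + 1) = 1)
    (a : Fin N → EuclideanSpace ℝ (Fin (n 0)))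
    (f : EuclideanSpace ℝ (Fin (n 0)) → ℝ) (lam : ℝ) (W : WeightSpace n H) : ℝ :=
  loss n H N hout a f W + lam / 2 * ‖W‖ ^ 2

/-- The `i`-th weight matrix `W_i` of a weight vector `W`. -/
def block (n : ℕ → ℕ) (H : ℕ) (W : WeightSpace n H) (i : Fin (H + 1)) :
    Matrix (Fin (n i)) (Fin (n (i + 1))) ℝ :=
  Matrix.of fun j k => W ⟨i, (j, k)⟩

/-- Operator norm (induced by the Euclidean norms) of a matrix. -/
noncomputable def opNorm2 {p q : ℕ} (M : Matrix (Fin p) (Fin q) ℝ) : ℝ :=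
  ‖LinearMap.toContinuousLinearMap (Matrix.toEuclideanLin M)‖

/-- `‖W‖_* = max_i ‖W_i‖₂`. -/
noncomputable def starNorm (n : ℕ → ℕ) (H : ℕ) (W : WeightSpace n H) : ℝ :=
  ⨆ i : Fin (H + 1), opNorm2 (block n H W i)

/-- The set `U(λ,θ)`. -/
noncomputable def Uset (n : ℕ → ℕ) (H N : ℕ) (hout : n (H + 1) = 1)
    (a : Fin N → EuclideanSpace ℝ (Fin (n 0)))
    (f : EuclideanSpace ℝ (Fin (n 0)) → ℝ) (lam θ r : ℝ) : Set (WeightSpace n H) :=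
  {W | Real.sqrt (loss n H N hout a f W) * starNorm n H W ^ (H - 1) <
    (lam - θ) / (Real.sqrt 2 * ((H : ℝ) * ((H : ℝ) + 1)) * r)}

/-- Activations of the network with the ReLU switches frozen at the values
`S_j(a, W)` determined by the weight `W` and the input `a`, evaluated at the
weight `V`:  `x̃_0 = a`, `x̃_{k+1} = S_{k+1}(a,W) (V_k^T x̃_k)`. -/
noncomputable def frozenAct (n : ℕ → ℕ) (H : ℕ) (W : WeightSpace n H)
    (a : EuclideanSpace ℝ (Fin (n 0))) (V : WeightSpace n H) :
    (k : ℕ) → k ≤ H + 1 → (Fin (n k) → ℝ)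
  | 0, _ => a
  | k + 1, h => fun j =>
      (if 0 < ∑ l : Fin (n k), W ⟨⟨k, h⟩, (l, j)⟩ * netAct n H W a k (Nat.le_of_succ_le h) l
        then (1 : ℝ) else 0) *
      ∑ l : Fin (n k), V ⟨⟨k, h⟩, (l, j)⟩ * frozenAct n H W a V k (Nat.le_of_succ_le h) l

/-- Scalar output `ỹ(a, V)` of the network with switches frozen as determined by `W`. -/
noncomputable def frozenOut (n : ℕ → ℕ) (H : ℕ) (hout : n (H + 1) = 1)
    (W : WeightSpace n H) (a : EuclideanSpace ℝ (Fin (n 0)))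
    (V : WeightSpace n H) : ℝ :=
  frozenAct n H W a V (H + 1) le_rfl ⟨0, by omega⟩

/-- The loss `ϕ(V)` with switches frozen as determined by `W` and the data. -/
noncomputable def frozenLoss (n : ℕ → ℕ) (H N : ℕ) (hout : n (H + 1) = 1)
    (a : Fin N → EuclideanSpace ℝ (Fin (n 0)))
    (f : EuclideanSpace ℝ (Fin (n 0)) → ℝ)
    (W : WeightSpace n H) (V : WeightSpace n H) : ℝ :=
  (1 / (2 * (N : ℝ))) * ∑ i, (f (a i) - frozenOut n H hout W (a i) V) ^ 2


/-!
With the switches frozen, `ỹ(a, W + tX)` is obtained from `a` by `H + 1` masked layers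
`v ↦ S (Wₖ + t Xₖ)ᵀ v`, so it is a polynomial in `t`. Expanding the product, the vector of
`tⁱ`-coefficients after `k` layers obeys Pascal's recursion, and since a masked layer has norm at
most `‖Wₖ‖₂ ≤ ‖W‖_*` resp. `‖Xₖ‖₂ ≤ ‖Xₖ‖_F ≤ ‖X‖`, it is bounded by
`C(k, i) ‖W‖_*^(k-i) ‖X‖ⁱ ‖a‖`. The second derivative at `0` is twice the `t²`-coefficient, and
`2 C(H + 1, 2) = H (H + 1)`.
-/

open Polynomial Matrix

section MatrixNorm

variable {p q : ℕ}

lemma norm_vecMul_le_opNorm2 (M : Matrix (Fin p) (Fin q) ℝ) (v : EuclideanSpace ℝ (Fin p)) :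
    ‖(WithLp.toLp 2 (v.ofLp ᵥ* M) : EuclideanSpace ℝ (Fin q))‖ ≤ opNorm2 M * ‖v‖ := by
  open scoped Matrix.Norms.L2Operator in
  calc _ = ‖(EuclideanSpace.equiv (Fin q) ℝ).symm (Mᵀ *ᵥ v.ofLp)‖ := by rw [mulVec_transpose]; rfl
    _ ≤ ‖Mᵀ‖ * ‖v‖ := l2_opNorm_mulVec Mᵀ v
    _ = opNorm2 M * ‖v‖ := by
      rw [← conjTranspose_eq_transpose_of_trivial, l2_opNorm_conjTranspose]; rfl

lemma opNorm2_le_sqrt_sum_sq (M : Matrix (Fin p) (Fin q) ℝ) :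
    opNorm2 M ≤ √(∑ i, ∑ j, M i j ^ 2) := by
  refine ContinuousLinearMap.opNorm_le_bound _ (Real.sqrt_nonneg _) fun v => ?_
  rw [EuclideanSpace.norm_eq, EuclideanSpace.norm_eq, ← Real.sqrt_mul (by positivity)]
  refine Real.sqrt_le_sqrt ?_
  rw [Finset.sum_mul]
  refine Finset.sum_le_sum fun i _ => ?_
  simpa [mulVec, dotProduct, sq_abs] using
    Finset.sum_mul_sq_le_sq_mul_sq Finset.univ (M i) v.ofLp

lemma norm_toLp_mul_le_of_abs_le_one (s w : Fin q → ℝ) (hs : ∀ j, |s j| ≤ 1) :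
    ‖(WithLp.toLp 2 (s * w) : EuclideanSpace ℝ (Fin q))‖ ≤
      ‖(WithLp.toLp 2 w : EuclideanSpace ℝ (Fin q))‖ := by
  simp only [EuclideanSpace.norm_eq]
  gcongr with j
  simpa [abs_mul] using mul_le_of_le_one_left (abs_nonneg (w j)) (hs j)

end MatrixNorm

/-- The layer `v ↦ S Mᵀ v`, where `S` is the diagonal matrix of `s`. -/
noncomputable def maskedLayer {p q : ℕ} (s : Fin q → ℝ) (M : Matrix (Fin p) (Fin q) ℝ)
    (v : EuclideanSpace ℝ (Fin p)) : EuclideanSpace ℝ (Fin q) :=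
  WithLp.toLp 2 (s * (v.ofLp ᵥ* M))

lemma norm_maskedLayer_le {p q : ℕ} {s : Fin q → ℝ} (hs : ∀ j, |s j| ≤ 1)
    (M : Matrix (Fin p) (Fin q) ℝ) (v : EuclideanSpace ℝ (Fin p)) :
    ‖maskedLayer s M v‖ ≤ opNorm2 M * ‖v‖ :=
  (norm_toLp_mul_le_of_abs_le_one s _ hs).trans (norm_vecMul_le_opNorm2 M v)

section WeightNorms

variable {n : ℕ → ℕ} {H : ℕ}

lemma starNorm_nonneg (W : WeightSpace n H) : 0 ≤ starNorm n H W :=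
  Real.iSup_nonneg fun _ => norm_nonneg _

lemma opNorm2_block_le_starNorm (W : WeightSpace n H) (i : Fin (H + 1)) :
    opNorm2 (block n H W i) ≤ starNorm n H W :=
  le_ciSup (f := fun i => opNorm2 (block n H W i)) (Set.finite_range _).bddAbove i

lemma opNorm2_block_le_norm (X : WeightSpace n H) (i : Fin (H + 1)) :
    opNorm2 (block n H X i) ≤ ‖X‖ := by
  refine (opNorm2_le_sqrt_sum_sq _).trans ?_
  rw [EuclideanSpace.norm_eq]
  refine Real.sqrt_le_sqrt ?_
  calc ∑ j, ∑ k, block n H X i j k ^ 2 = ∑ jk : Fin (n i) × Fin (n (i + 1)), X ⟨i, jk⟩ ^ 2 := by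
        rw [Fintype.sum_prod_type]; rfl
    _ ≤ ∑ i' : Fin (H + 1), ∑ jk : Fin (n i') × Fin (n (i' + 1)), X ⟨i', jk⟩ ^ 2 :=
        Finset.single_le_sum (f := fun i' : Fin (H + 1) => ∑ jk, X ⟨i', jk⟩ ^ 2)
          (fun _ _ => by positivity) (Finset.mem_univ i)
    _ = ∑ idx, ‖X idx‖ ^ 2 := by
        rw [← Finset.univ_sigma_univ, Finset.sum_sigma]; simp [sq_abs]

end WeightNorms

lemma choose_succ_mul_pow_sub_succ (c : ℝ) (k i : ℕ) :
    (k.choose (i + 1) : ℝ) * (c * c ^ (k - (i + 1))) = k.choose (i + 1) * c ^ (k - i) := by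
  rcases lt_or_ge i k with hik | hik
  · rw [← pow_succ', show k - (i + 1) + 1 = k - i by omega]
  · simp [Nat.choose_eq_zero_of_lt (Nat.lt_succ_of_le hik)]

section FrozenNetwork

variable {n : ℕ → ℕ} {H : ℕ} (W X : WeightSpace n H) (a : EuclideanSpace ℝ (Fin (n 0)))

/-- The diagonal of the switch matrix `S_{k+1}(a, W)`. -/
noncomputable def switchVec (k : ℕ) (h : k + 1 ≤ H + 1) : Fin (n (k + 1)) → ℝ := fun j =>
  if 0 < ∑ l : Fin (n k), W ⟨⟨k, h⟩, (l, j)⟩ * netAct n H W a k (Nat.le_of_succ_le h) l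
  then 1 else 0

lemma abs_switchVec_le_one (k : ℕ) (h : k + 1 ≤ H + 1) (j : Fin (n (k + 1))) :
    |switchVec W a k h j| ≤ 1 := by
  unfold switchVec; split_ifs <;> norm_num

/-- The frozen activations at the weight `W + t • X`, as polynomials in `t`. -/
noncomputable def frozenActPoly : (k : ℕ) → k ≤ H + 1 → Fin (n k) → ℝ[X]
  | 0, _ => fun j => C (a j)
  | k + 1, h => fun j => C (switchVec W a k h j) *
      ∑ l, (C (W ⟨⟨k, h⟩, (l, j)⟩) + Polynomial.X * C (X ⟨⟨k, h⟩, (l, j)⟩)) *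
        frozenActPoly k (Nat.le_of_succ_le h) l

lemma eval_frozenActPoly (t : ℝ) :
    ∀ (k : ℕ) (hk : k ≤ H + 1) (j : Fin (n k)),
      (frozenActPoly W X a k hk j).eval t = frozenAct n H W a (W + t • X) k hk j
  | 0, _, _ => by simp [frozenActPoly, frozenAct]
  | k + 1, h, j => by
    simp only [frozenActPoly, frozenAct, eval_mul, eval_C, eval_finsetSum, eval_add, eval_X,
      eval_frozenActPoly t k (Nat.le_of_succ_le h), PiLp.add_apply, PiLp.smul_apply, smul_eq_mul]
    rfl

noncomputable def frozenCoeff (k : ℕ) (hk : k ≤ H + 1) (i : ℕ) : EuclideanSpace ℝ (Fin (n k)) :=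
  WithLp.toLp 2 fun j => (frozenActPoly W X a k hk j).coeff i

lemma frozenCoeff_zero (i : ℕ) :
    frozenCoeff W X a 0 (Nat.zero_le _) i = if i = 0 then a else 0 := by
  ext j
  split_ifs with hi <;> simp [frozenCoeff, frozenActPoly, coeff_C, hi]

lemma frozenCoeff_succ_zero (k : ℕ) (h : k + 1 ≤ H + 1) :
    frozenCoeff W X a (k + 1) h 0 =
      maskedLayer (switchVec W a k h) (block n H W ⟨k, h⟩)
        (frozenCoeff W X a k (Nat.le_of_succ_le h) 0) := by
  ext j
  simp only [frozenCoeff, frozenActPoly, maskedLayer, block, coeff_C_mul, finsetSum_coeff, add_mul,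
    coeff_add, mul_assoc, coeff_X_mul_zero, add_zero]
  simp [vecMul, dotProduct, mul_comm]

lemma frozenCoeff_succ_succ (k : ℕ) (h : k + 1 ≤ H + 1) (i : ℕ) :
    frozenCoeff W X a (k + 1) h (i + 1) =
      maskedLayer (switchVec W a k h) (block n H W ⟨k, h⟩)
          (frozenCoeff W X a k (Nat.le_of_succ_le h) (i + 1)) +
        maskedLayer (switchVec W a k h) (block n H X ⟨k, h⟩)
          (frozenCoeff W X a k (Nat.le_of_succ_le h) i) := by
  ext j
  simp only [frozenCoeff, frozenActPoly, maskedLayer, block, coeff_C_mul, finsetSum_coeff, add_mul,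
    coeff_add, mul_assoc, coeff_X_mul, Finset.sum_add_distrib, mul_add]
  simp [vecMul, dotProduct, mul_comm]

lemma norm_frozenCoeff_le :
    ∀ (k : ℕ) (hk : k ≤ H + 1) (i : ℕ),
      ‖frozenCoeff W X a k hk i‖ ≤ k.choose i * starNorm n H W ^ (k - i) * ‖X‖ ^ i * ‖a‖
  | 0, _, 0 => by simp [frozenCoeff_zero]
  | 0, _, i + 1 => by simp [frozenCoeff_zero]
  | k + 1, h, 0 => by
    have ih := norm_frozenCoeff_le k (Nat.le_of_succ_le h) 0
    rw [frozenCoeff_succ_zero]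
    calc _ ≤ starNorm n H W * ‖frozenCoeff W X a k (Nat.le_of_succ_le h) 0‖ :=
          (norm_maskedLayer_le (abs_switchVec_le_one W a k h) _ _).trans
            (by gcongr; exact opNorm2_block_le_starNorm W _)
      _ ≤ starNorm n H W * (starNorm n H W ^ k * ‖a‖) := by
          gcongr
          · exact starNorm_nonneg W
          · simpa using ih
      _ = _ := by simp [pow_succ']; ring
  | k + 1, h, i + 1 => by
    have ih₁ := norm_frozenCoeff_le k (Nat.le_of_succ_le h) (i + 1)
    have ih₂ := norm_frozenCoeff_le k (Nat.le_of_succ_le h) i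
    have hs := abs_switchVec_le_one W a k h
    rw [frozenCoeff_succ_succ]
    calc _ ≤ starNorm n H W * ‖frozenCoeff W X a k (Nat.le_of_succ_le h) (i + 1)‖ +
          ‖X‖ * ‖frozenCoeff W X a k (Nat.le_of_succ_le h) i‖ := by
          refine (norm_add_le _ _).trans (add_le_add ?_ ?_)
          · exact (norm_maskedLayer_le hs _ _).trans
              (by gcongr; exact opNorm2_block_le_starNorm W _)
          · exact (norm_maskedLayer_le hs _ _).trans
              (by gcongr; exact opNorm2_block_le_norm X _)
      _ ≤ starNorm n H W * (k.choose (i + 1) * starNorm n H W ^ (k - (i + 1)) *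
              ‖X‖ ^ (i + 1) * ‖a‖) +
            ‖X‖ * (k.choose i * starNorm n H W ^ (k - i) * ‖X‖ ^ i * ‖a‖) := by
          gcongr
          exact starNorm_nonneg W
      _ = ((k.choose (i + 1) : ℝ) * (starNorm n H W * starNorm n H W ^ (k - (i + 1))) +
            k.choose i * starNorm n H W ^ (k - i)) * ‖X‖ ^ (i + 1) * ‖a‖ := by ring
      _ = _ := by
          rw [choose_succ_mul_pow_sub_succ, Nat.choose_succ_succ', Nat.add_sub_add_right]
          push_cast; ring

end FrozenNetwork

lemma deriv_deriv_eval_zero {𝕜 : Type*} [NontriviallyNormedField 𝕜] (p : 𝕜[X]) :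
    deriv (deriv fun x => p.eval x) 0 = 2 * p.coeff 2 := by
  have hderiv : deriv (fun x => p.eval x) = fun x => p.derivative.eval x :=
    funext fun _ => p.deriv
  rw [hderiv, p.derivative.deriv, ← coeff_zero_eq_eval_zero, coeff_derivative, coeff_derivative]
  norm_num
  ring

theorem frozen_output_second_derivative_bound_general (n : ℕ → ℕ) (H : ℕ)
    (hout : n (H + 1) = 1)
    (a : EuclideanSpace ℝ (Fin (n 0))) (W X : WeightSpace n H) :
    |deriv (deriv fun t : ℝ => frozenOut n H hout W a (W + t • X)) 0| ≤
      (H : ℝ) * ((H : ℝ) + 1) * starNorm n H W ^ (H - 1) * ‖X‖ ^ 2 * ‖a‖ := by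
  set y : ℝ[X] := frozenActPoly W X a (H + 1) le_rfl ⟨0, by omega⟩
  have hy : (fun t : ℝ => frozenOut n H hout W a (W + t • X)) = fun t => y.eval t :=
    funext fun t => (eval_frozenActPoly W X a t _ _ _).symm
  have hcoeff : |y.coeff 2| ≤ ‖frozenCoeff W X a (H + 1) le_rfl 2‖ :=
    PiLp.norm_apply_le (frozenCoeff W X a (H + 1) le_rfl 2) _
  have hchoose : 2 * ((H + 1).choose 2 : ℝ) = H * (H + 1) := by
    rw [Nat.cast_choose_two]; push_cast; ring
  rw [hy, deriv_deriv_eval_zero, abs_mul, abs_two]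
  calc 2 * |y.coeff 2|
      ≤ 2 * ((H + 1).choose 2 * starNorm n H W ^ (H + 1 - 2) * ‖X‖ ^ 2 * ‖a‖) := by
        gcongr; exact hcoeff.trans (norm_frozenCoeff_le W X a _ _ 2)
    _ = _ := by rw [show H + 1 - 2 = H - 1 by omega, ← hchoose]; ring

/-- the second derivative in `t` at `t = 0` of the frozen-switch network
output `ỹ(a, W + tX)` satisfies
`|(d²/dt²)|₀ ỹ(a, W+tX)| ≤ H(H+1)·‖W‖_*^{H−1}·‖X‖²·‖a‖₂`. -/
theorem frozen_output_second_derivative_bound (n : ℕ → ℕ) (H : ℕ)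
    (hout : n (H + 1) = 1) (hwidth : ∀ i, 1 ≤ i → i ≤ H → 1 < n i)
    (a : EuclideanSpace ℝ (Fin (n 0))) (W X : WeightSpace n H) :
    |deriv (deriv fun t : ℝ => frozenOut n H hout W a (W + t • X)) 0| ≤
      (H : ℝ) * ((H : ℝ) + 1) * starNorm n H W ^ (H - 1) * ‖X‖ ^ 2 * ‖a‖ :=
  frozen_output_second_derivative_bound_general n H hout a W X
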